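/- Let γ be a non-geodesic unit-speed almost contact curve in a trans-Sasakian 3-manifold of type (α, β), with ∇_{γ'}γ' = -βξ + ϑφγ' and curvature κ = √(β² + ϑ²) > 0. Then the torsion of γ satisfies τ = |α + (βϑ' - β'ϑ)/κ²|, where ' denotes differentiation along γ. -/

import Mathlib

/-!
Differentiating `N = (-β/κ) ξ + (ϑ/κ) φT` with the trans-Sasakian formulas `∇ξ = -α φT + β T`
and `∇(φT) = α ξ + φ(κ N) = α ξ - ϑ T`, and using `(-β/κ)' = ϑ (βϑ' - β'ϑ)/κ³`,
`(ϑ/κ)' = β (βϑ' - β'ϑ)/κ³`, one finds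
`∇N = -κ T + L ((ϑ/κ) ξ + (β/κ) φT)` with `L = α + (βϑ' - β'ϑ)/κ²`,
the `T`-component being `-(β² + ϑ²)/κ = -κ`. Since `ξ` and `φT` are orthonormal and
`(ϑ/κ)² + (β/κ)² = 1`, comparing with `∇N = -κ T + τ B` gives `τ B = L u` for a unit vector `u`,
hence `τ = |L|`.
-/

open scoped RealInnerProductSpace

structure IsAlmostContactMetric {V : Type*} [NormedAddCommGroup V] [InnerProductSpace ℝ V]
    (φ : V →ₗ[ℝ] V) (ξ : V) (η : V →ₗ[ℝ] ℝ) : Prop where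
  φ_φ : ∀ X, φ (φ X) = -X + η X • ξ
  η_ξ : η ξ = 1
  inner_φ_φ : ∀ X Y, ⟪φ X, φ Y⟫ = ⟪X, Y⟫ - η X * η Y

namespace IsAlmostContactMetric

variable {V : Type*} [NormedAddCommGroup V] [InnerProductSpace ℝ V]
  {φ : V →ₗ[ℝ] V} {ξ : V} {η : V →ₗ[ℝ] ℝ}

theorem ξ_ne_zero (h : IsAlmostContactMetric φ ξ η) : ξ ≠ 0 := by
  rintro rfl
  simpa using h.η_ξ

theorem φ_ξ (h : IsAlmostContactMetric φ ξ η) : φ ξ = 0 := by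
  have hφφξ : φ (φ ξ) = 0 := by rw [h.φ_φ, h.η_ξ, one_smul, neg_add_cancel]
  set c := η (φ ξ)
  -- applying φ² to φ ξ shows φ ξ = c ξ, and then 0 = φ (φ ξ) = c² ξ
  have hc : φ ξ = c • ξ := by
    have := h.φ_φ (φ ξ)
    rwa [hφφξ, map_zero, eq_comm, neg_add_eq_zero] at this
  have hc2 : (c * c) • ξ = 0 := by rw [← smul_smul, ← hc, ← map_smul, ← hc, hφφξ]
  rw [hc, mul_self_eq_zero.mp ((smul_eq_zero.mp hc2).resolve_right h.ξ_ne_zero), zero_smul]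

theorem inner_ξ_left (h : IsAlmostContactMetric φ ξ η) (Y : V) : ⟪ξ, Y⟫ = η Y := by
  have := h.inner_φ_φ ξ Y
  rw [h.φ_ξ, inner_zero_left, h.η_ξ, one_mul] at this
  linarith

theorem inner_ξ_self (h : IsAlmostContactMetric φ ξ η) : ⟪ξ, ξ⟫ = 1 := by
  rw [h.inner_ξ_left, h.η_ξ]

theorem η_φ (h : IsAlmostContactMetric φ ξ η) (X : V) : η (φ X) = 0 := by
  -- ‖φ (φ X)‖² = ‖X‖² - (η X)² = ‖φ X‖², while also ‖φ (φ X)‖² = ‖φ X‖² - (η (φ X))²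
  have hφφ := h.inner_φ_φ (φ X) (φ X)
  have hφ := h.inner_φ_φ X X
  rw [h.φ_φ X] at hφφ
  simp only [inner_add_add_self, real_inner_smul_left, real_inner_smul_right, inner_neg_left,
    inner_neg_right, h.inner_ξ_left, real_inner_comm ξ, map_smul, h.η_ξ, smul_eq_mul] at hφφ
  exact mul_self_eq_zero.mp (by linarith)

theorem inner_φ_self (h : IsAlmostContactMetric φ ξ η) (X : V) : ⟪φ X, X⟫ = 0 := by
  have := h.inner_φ_φ (φ X) X
  rw [h.φ_φ, h.η_φ, zero_mul, sub_zero, inner_add_left, inner_neg_left, real_inner_smul_left,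
    h.inner_ξ_left, h.η_φ, mul_zero, add_zero, real_inner_comm] at this
  linarith

theorem norm_smul_ξ_add_smul_φ (h : IsAlmostContactMetric φ ξ η) {X : V} (hX : η X = 0)
    (hX1 : ‖X‖ = 1) (a b : ℝ) : ‖a • ξ + b • φ X‖ = √(a ^ 2 + b ^ 2) := by
  have hφX : ⟪φ X, φ X⟫ = 1 := by
    rw [h.inner_φ_φ, hX, real_inner_self_eq_norm_sq, hX1]
    ring
  rw [norm_eq_sqrt_real_inner]
  congr 1
  simp only [inner_add_add_self, real_inner_smul_left, real_inner_smul_right, h.inner_ξ_left,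
    real_inner_comm ξ, map_smul, h.η_ξ, h.η_φ, smul_eq_mul, hφX]
  ring

end IsAlmostContactMetric

theorem HasDerivAt.div_of_eq_sqrt_sq_add_sq {f g k : ℝ → ℝ} {f' g' s : ℝ}
    (hk : ∀ t, k t = √(f t ^ 2 + g t ^ 2)) (hks : k s ≠ 0)
    (hf : HasDerivAt f f' s) (hg : HasDerivAt g g' s) :
    HasDerivAt (fun t => f t / k t) (g s * (g s * f' - g' * f s) / k s ^ 3) s := by
  have hk2 : k s ^ 2 = f s ^ 2 + g s ^ 2 := by rw [hk]; exact Real.sq_sqrt (by positivity)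
  have hfg : f s ^ 2 + g s ^ 2 ≠ 0 := by rw [← hk2]; exact pow_ne_zero 2 hks
  have hkd : HasDerivAt k ((2 * f s * f' + 2 * g s * g') / (2 * k s)) s := by
    rw [hk s, funext hk]
    convert ((hf.fun_pow 2).fun_add (hg.fun_pow 2)).sqrt hfg using 1
    push_cast; ring
  refine (hf.div hkd hks).congr_deriv ?_
  field_simp
  linear_combination f' * hk2

theorem eq_abs_of_smul_eq_smul {V : Type*} [NormedAddCommGroup V] [NormedSpace ℝ V]
    {a b : ℝ} {u v : V} (ha : 0 ≤ a) (hu : ‖u‖ = 1) (hv : ‖v‖ = 1) (h : a • u = b • v) :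
    a = |b| := by
  have := congrArg norm h
  rwa [norm_smul, norm_smul, hu, hv, mul_one, mul_one, Real.norm_of_nonneg ha,
    Real.norm_eq_abs] at this

/-- Let γ be a non-geodesic unit-speed almost contact curve in a trans-Sasakian
3-manifold of type (α, β), with ∇_{γ'}γ' = -βξ + ϑφγ' and curvature
κ = √(β² + ϑ²) > 0. Then the torsion satisfies τ = |α + (βϑ' - β'ϑ)/κ²|.

The tangent spaces along γ are modelled by a real inner product space `V` (the
metric g being the inner product); `D` is the covariant derivative along γ
(additive and satisfying the Leibniz rule); (T, N, B) is the Frenet frame, and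
the hypotheses `hDξ`, `hDφT` encode the trans-Sasakian formulas for ∇_{γ'}ξ and
(∇_{γ'}φ)γ' along the curve. -/
theorem stmt_9 {V : Type*} [NormedAddCommGroup V] [InnerProductSpace ℝ V]
    (φ : ℝ → V →ₗ[ℝ] V) (ξ T N B : ℝ → V) (η : ℝ → V →ₗ[ℝ] ℝ)
    (α β ϑ κ τ : ℝ → ℝ)
    (D : (ℝ → V) → (ℝ → V))
    -- covariant derivative along γ: additivity and Leibniz rule
    (hDadd : ∀ X Y : ℝ → V, D (X + Y) = D X + D Y)
    (hDsmul : ∀ (f : ℝ → ℝ) (X : ℝ → V) (s : ℝ), DifferentiableAt ℝ f s →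
      D (fun t => f t • X t) s = deriv f s • X s + f s • D X s)
    -- almost contact metric structure along the curve
    (hφ : ∀ s : ℝ, ∀ X : V, φ s (φ s X) = -X + η s X • ξ s)
    (hηξ : ∀ s : ℝ, η s (ξ s) = 1)
    (hg : ∀ s : ℝ, ∀ X Y : V, ⟪φ s X, φ s Y⟫ = ⟪X, Y⟫ - η s X * η s Y)
    -- γ is a unit-speed almost contact curve
    (hT : ∀ s : ℝ, ‖T s‖ = 1) (hleg : ∀ s : ℝ, η s (T s) = 0)
    -- trans-Sasakian covariant derivatives along γ: ∇_{γ'}ξ and ∇_{γ'}(φγ')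
    (hDξ : ∀ s : ℝ, D ξ s = -(α s) • φ s (T s) + β s • (T s - η s (T s) • ξ s))
    (hDφT : ∀ s : ℝ, D (fun t => φ t (T t)) s =
      ((α s * ⟪T s, T s⟫) • ξ s - (α s * η s (T s)) • T s)
      + ((β s * ⟪φ s (T s), T s⟫) • ξ s - (β s * η s (T s)) • φ s (T s))
      + φ s (D T s))
    -- curvature and the Frenet–Serret apparatus
    (hκ : ∀ s : ℝ, κ s = Real.sqrt (β s ^ 2 + ϑ s ^ 2))
    (hκpos : ∀ s : ℝ, 0 < κ s)
    (hDT : ∀ s : ℝ, D T s = κ s • N s)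
    (hN : ∀ s : ℝ, N s = (-(β s) / κ s) • ξ s + (ϑ s / κ s) • φ s (T s))
    (hDN : ∀ s : ℝ, D N s = -(κ s) • T s + τ s • B s)
    (hB : ∀ s : ℝ, ‖B s‖ = 1) (hτ : ∀ s : ℝ, 0 ≤ τ s)
    -- β and ϑ are differentiable along γ
    (hβ : Differentiable ℝ β) (hϑ : Differentiable ℝ ϑ) :
    ∀ s : ℝ, τ s = |α s + (β s * deriv ϑ s - deriv β s * ϑ s) / (κ s) ^ 2| := by
  intro s
  have acm : ∀ t, IsAlmostContactMetric (φ t) (ξ t) (η t) := fun t => ⟨hφ t, hηξ t, hg t⟩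
  have hκ0 : κ s ≠ 0 := (hκpos s).ne'
  have hκsq : κ s ^ 2 = β s ^ 2 + ϑ s ^ 2 := by rw [hκ]; exact Real.sq_sqrt (by positivity)
  have ha : HasDerivAt (fun t => -β t / κ t)
      (ϑ s * (β s * deriv ϑ s - deriv β s * ϑ s) / κ s ^ 3) s :=
    (HasDerivAt.div_of_eq_sqrt_sq_add_sq (fun t => by rw [neg_sq, hκ]) hκ0
      (hβ s).hasDerivAt.fun_neg (hϑ s).hasDerivAt).congr_deriv (by ring)
  have hb : HasDerivAt (fun t => ϑ t / κ t)
      (β s * (β s * deriv ϑ s - deriv β s * ϑ s) / κ s ^ 3) s :=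
    HasDerivAt.div_of_eq_sqrt_sq_add_sq (fun t => by rw [add_comm, hκ]) hκ0
      (hϑ s).hasDerivAt (hβ s).hasDerivAt
  have hDξ' : D ξ s = -(α s) • φ s (T s) + β s • T s := by
    rw [hDξ, hleg, zero_smul, sub_zero]
  have hDφT' : D (fun t => φ t (T t)) s = α s • ξ s - ϑ s • T s := by
    rw [hDφT, real_inner_self_eq_norm_sq, hT, (acm s).inner_φ_self, hleg, hDT, hN, map_smul,
      map_add, map_smul, map_smul, (acm s).φ_ξ, (acm s).φ_φ, hleg]
    match_scalars <;> field_simp <;> ring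
  set L := α s + (β s * deriv ϑ s - deriv β s * ϑ s) / κ s ^ 2 with hL
  have hDN' : D N s = -(κ s) • T s + L • ((ϑ s / κ s) • ξ s + (β s / κ s) • φ s (T s)) := by
    have hNfun : N = (fun t => (-β t / κ t) • ξ t) + fun t => (ϑ t / κ t) • φ t (T t) := funext hN
    rw [hNfun, hDadd, Pi.add_apply, hDsmul _ _ s ha.differentiableAt,
      hDsmul _ _ s hb.differentiableAt, ha.deriv, hb.deriv, hDξ', hDφT', hL]
    match_scalars <;> field_simp
    · ring
    · linear_combination hκsq
  have hτB : τ s • B s = L • ((ϑ s / κ s) • ξ s + (β s / κ s) • φ s (T s)) := by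
    rw [← add_right_inj (-(κ s) • T s), ← hDN, hDN']
  have hunit : ‖(ϑ s / κ s) • ξ s + (β s / κ s) • φ s (T s)‖ = 1 := by
    rw [(acm s).norm_smul_ξ_add_smul_φ (hleg s) (hT s), div_pow, div_pow, ← add_div, add_comm,
      ← hκsq, div_self (pow_ne_zero 2 hκ0), Real.sqrt_one]
  exact eq_abs_of_smul_eq_smul (hτ s) (hB s) hunit hτB
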